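/- arXiv:1710.09263 — 3 statements merged into one kernel-verified Lean document; each statement's English description precedes it below -/
import Mathlib

section
/- Let (W, W') be an exchangeable pair of real-valued square-integrable random variables satisfying the linear regression condition E[W' - W | W] = -λW for some λ > 0. Then for every bounded measurable function f: ℝ → ℝ, E[W f(W)] = (1/(2λ)) E[(f(W) - f(W'))(W - W')]. -/
open MeasureTheory ProbabilityTheory

/-! The regression condition turns `E[f(W)(W' - W)]` into `-λ E[W f(W)]` by pulling the
`W`-measurable factor `f(W)` out of the conditional expectation. Exchangeability says that
`E[f(W)(W - W')] = E[f(W')(W' - W)]`, so `E[(f(W) - f(W'))(W - W')] = 2 E[f(W)(W - W')]`. -/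

section PullOut

variable {Ω : Type*} {m m₀ : MeasurableSpace Ω} {μ : Measure Ω} [IsFiniteMeasure μ]

theorem integral_mul_condExp_of_bound (hm : m ≤ m₀) {g Z : Ω → ℝ} (hg : StronglyMeasurable[m] g)
    {C : ℝ} (hgC : ∀ᵐ ω ∂μ, ‖g ω‖ ≤ C) (hZ : Integrable Z μ) :
    ∫ ω, g ω * (μ[Z | m]) ω ∂μ = ∫ ω, g ω * Z ω ∂μ :=
  (integral_congr_ae (condExp_stronglyMeasurable_mul_of_bound hm hg hZ C hgC).symm).trans
    (integral_condExp hm)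

end PullOut

section Exchangeable

variable {Ω : Type*} [MeasurableSpace Ω] {μ : Measure Ω} {X Y : Ω → ℝ} {f : ℝ → ℝ} {C : ℝ}

theorem MeasureTheory.Integrable.comp_bdd_mul {Z : Ω → ℝ} (hZ : Integrable Z μ)
    (hf : Measurable f) (hfC : ∀ x, |f x| ≤ C) (hX : AEMeasurable X μ) :
    Integrable (fun ω => f (X ω) * Z ω) μ :=
  hZ.bdd_mul (hf.comp_aemeasurable hX).aestronglyMeasurable (ae_of_all _ fun ω => hfC (X ω))

variable (hexch : IdentDistrib (fun ω => (X ω, Y ω)) (fun ω => (Y ω, X ω)) μ μ)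
include hexch

theorem integrable_of_exchangeable (hX : Integrable X μ) : Integrable Y μ :=
  (hexch.comp measurable_fst).integrable_iff.1 hX

theorem integral_sub_mul_sub_of_exchangeable (hX : Integrable X μ) (hf : Measurable f)
    (hfC : ∀ x, |f x| ≤ C) :
    ∫ ω, (f (X ω) - f (Y ω)) * (X ω - Y ω) ∂μ = 2 * ∫ ω, f (X ω) * (X ω - Y ω) ∂μ := by
  have hY : Integrable Y μ := integrable_of_exchangeable hexch hX
  have hswap : ∫ ω, f (Y ω) * (Y ω - X ω) ∂μ = ∫ ω, f (X ω) * (X ω - Y ω) ∂μ :=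
    (hexch.comp (u := fun p : ℝ × ℝ => f p.1 * (p.1 - p.2)) (by fun_prop)).integral_eq.symm
  calc ∫ ω, (f (X ω) - f (Y ω)) * (X ω - Y ω) ∂μ
      = ∫ ω, f (X ω) * (X ω - Y ω) ∂μ + ∫ ω, f (Y ω) * (Y ω - X ω) ∂μ := by
        have hXY : Integrable (fun ω => X ω - Y ω) μ := hX.sub hY
        have hYX : Integrable (fun ω => Y ω - X ω) μ := hY.sub hX
        rw [← integral_add (hXY.comp_bdd_mul hf hfC hX.aemeasurable)
          (hYX.comp_bdd_mul hf hfC hY.aemeasurable)]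
        congr 1 with ω
        ring
    _ = 2 * ∫ ω, f (X ω) * (X ω - Y ω) ∂μ := by rw [hswap]; ring

end Exchangeable

theorem stmt0_general {Ω : Type*} [MeasurableSpace Ω] (μ : Measure Ω) [IsProbabilityMeasure μ]
    (W W' : Ω → ℝ) (hW : Measurable W)
    (hW2 : MemLp W 2 μ)
    (hexch : IdentDistrib (fun ω => (W ω, W' ω)) (fun ω => (W' ω, W ω)) μ μ)
    (lam : ℝ) (hlam : 0 < lam)
    (hreg : μ[fun ω => W' ω - W ω | MeasurableSpace.comap W inferInstance]
      =ᵐ[μ] fun ω => -lam * W ω)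
    (f : ℝ → ℝ) (hf : Measurable f) (C : ℝ) (hfb : ∀ x, |f x| ≤ C) :
    ∫ ω, W ω * f (W ω) ∂μ
      = (1 / (2 * lam)) * ∫ ω, (f (W ω) - f (W' ω)) * (W ω - W' ω) ∂μ := by
  have hWint : Integrable W μ := hW2.integrable one_le_two
  have hW'int : Integrable W' μ := integrable_of_exchangeable hexch hWint
  have hfW : StronglyMeasurable[MeasurableSpace.comap W inferInstance] (fun ω => f (W ω)) :=
    (hf.comp (comap_measurable W)).stronglyMeasurable
  have hpull : ∫ ω, f (W ω) * (W' ω - W ω) ∂μ = -lam * ∫ ω, W ω * f (W ω) ∂μ := by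
    have hdiff : Integrable (fun ω => W' ω - W ω) μ := hW'int.sub hWint
    rw [← integral_mul_condExp_of_bound hW.comap_le hfW (ae_of_all _ fun ω => hfb (W ω)) hdiff,
      integral_congr_ae (hreg.mono fun ω hω => by rw [hω]), ← integral_const_mul]
    congr 1 with ω
    ring
  have hflip : ∫ ω, f (W ω) * (W ω - W' ω) ∂μ = -∫ ω, f (W ω) * (W' ω - W ω) ∂μ := by
    rw [← integral_neg]
    congr 1 with ω
    ring
  rw [integral_sub_mul_sub_of_exchangeable hexch hWint hf hfb, hflip, hpull]
  field_simp

/-- Stein's exchangeable pair identity: if `(W, W')` is an exchangeable pair of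
square-integrable random variables with `E[W' - W | W] = -λ W`, then for every bounded
measurable `f`, `E[W f(W)] = (1/(2λ)) E[(f(W) - f(W'))(W - W')]`. -/
theorem stmt0 {Ω : Type*} [MeasurableSpace Ω] (μ : Measure Ω) [IsProbabilityMeasure μ]
    (W W' : Ω → ℝ) (hW : Measurable W) (hW' : Measurable W')
    (hW2 : MemLp W 2 μ) (hW'2 : MemLp W' 2 μ)
    (hexch : IdentDistrib (fun ω => (W ω, W' ω)) (fun ω => (W' ω, W ω)) μ μ)
    (lam : ℝ) (hlam : 0 < lam)
    (hreg : μ[fun ω => W' ω - W ω | MeasurableSpace.comap W inferInstance]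
      =ᵐ[μ] fun ω => -lam * W ω)
    (f : ℝ → ℝ) (hf : Measurable f) (C : ℝ) (hfb : ∀ x, |f x| ≤ C) :
    ∫ ω, W ω * f (W ω) ∂μ
      = (1 / (2 * lam)) * ∫ ω, (f (W ω) - f (W' ω)) * (W ω - W' ω) ∂μ :=
  stmt0_general μ W W' hW hW2 hexch lam hlam hreg f hf C hfb
end

section
/- Let n ≥ 2, let {X_{i,j} : i, j ∈ {1,…,n}} be an array of independent real random variables with E[X_{i,j}] = c_{ij}, Var(X_{i,j}) = σ_{ij}^2, and suppose the row and column averages of the means vanish: for every i, Σ_{j=1}^n c_{ij} = 0, and for every j, Σ_{i=1}^n c_{ij} = 0. Let π be a uniformly random permutation of {1,…,n}, independent of the array. Then Var(Σ_{i=1}^n X_{i,π(i)}) = (1/n) Σ_{i,j=1}^n σ_{ij}^2 + (1/(n-1)) Σ_{i,j=1}^n c_{ij}^2. -/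
open MeasureTheory ProbabilityTheory
open scoped ENNReal NNReal

instance {n : ℕ} : MeasurableSpace (Equiv.Perm (Fin n)) := ⊤

/-!
Conditionally on `π = σ`, the sum is `Y σ = ∑ i, X i (σ i)`, whose summands are independent, so
`E[Y σ] = ∑ i, c i (σ i)` and `E[(Y σ)²] = ∑ i, σsq i (σ i) + (∑ i, c i (σ i))²`; the moments of
the sum are the averages of these over `σ ∈ S_n`.

Those averages come from the right invariance of summation over `S_n`: `∑ σ, f (σ i)` does not
depend on `i`, and `∑ σ, g (σ i) (σ k)` does not depend on the pair `i ≠ k`, so summing over all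
indices evaluates them as `(n-1)! ∑ j, f j` and `(n-2)! ∑_{j ≠ l} g j l`. With vanishing row sums
this gives `∑ σ, c i (σ i) = 0` and `∑ σ, c i (σ i) * c k (σ k) = -(n-2)! ∑ j, c i j * c k j`
for `i ≠ k`; with vanishing column sums the off-diagonal terms of `∑ σ, (∑ i, c i (σ i))²` add
up to `(n-2)! ∑ c²`, for a total of `n! / (n-1) ∑ c²`.
-/

open Finset Nat

namespace Equiv.Perm

variable {α : Type*} [DecidableEq α]

theorem exists_apply_eq_and_apply_eq {i k j l : α} (hik : i ≠ k) (hjl : j ≠ l) :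
    ∃ τ : Perm α, τ i = j ∧ τ k = l := by
  refine ⟨swap (swap i j k) l * swap i j, ?_, by simp⟩
  have hj : swap i j k ≠ j := by
    rcases eq_or_ne k j with rfl | hkj
    · simpa using hik
    · rwa [swap_apply_of_ne_of_ne hik.symm hkj]
  simp only [mul_apply, swap_apply_left]
  exact swap_apply_of_ne_of_ne hj.symm hjl

variable [Fintype α]

section AddCommMonoid

variable {M : Type*} [AddCommMonoid M]

theorem sum_apply_eq (f : α → M) (i a : α) :
    ∑ σ : Perm α, f (σ i) = ∑ σ : Perm α, f (σ a) := by
  rw [← _root_.Equiv.sum_comp (Equiv.mulRight (swap a i)) (fun σ => f (σ a))]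
  simp

theorem sum_apply_apply_eq_of_ne {i k i' k' : α} (hik : i ≠ k) (hik' : i' ≠ k')
    (g : α → α → M) :
    ∑ σ : Perm α, g (σ i) (σ k) = ∑ σ : Perm α, g (σ i') (σ k') := by
  obtain ⟨τ, hτi, hτk⟩ := exists_apply_eq_and_apply_eq hik' hik
  rw [← _root_.Equiv.sum_comp (Equiv.mulRight τ) (fun σ => g (σ i') (σ k'))]
  simp [hτi, hτk]

end AddCommMonoid

section CommRing

variable {R : Type*} [CommRing R]

theorem sum_sum_apply (f : α → R) :
    ∑ σ : Perm α, ∑ a, f (σ a) = (Fintype.card α)! * ∑ j, f j := by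
  simp [_root_.Equiv.sum_comp, Fintype.card_perm]

theorem card_mul_sum_apply (f : α → R) (i : α) :
    Fintype.card α * ∑ σ : Perm α, f (σ i) = (Fintype.card α)! * ∑ j, f j := by
  rw [← sum_sum_apply, sum_comm, ← Finset.card_univ, ← nsmul_eq_mul, ← sum_const]
  exact sum_congr rfl fun a _ => sum_apply_eq f i a

theorem card_mul_sum_sum_apply (f : α → α → R) :
    Fintype.card α * ∑ σ : Perm α, ∑ i, f i (σ i)
      = (Fintype.card α)! * ∑ i, ∑ j, f i j := by
  rw [sum_comm, mul_sum, mul_sum]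
  exact sum_congr rfl fun i _ => card_mul_sum_apply (f i) i

theorem card_mul_card_sub_one_mul_sum_apply_apply {i k : α} (hik : i ≠ k) (g : α → α → R) :
    Fintype.card α * (Fintype.card α - 1) * ∑ σ : Perm α, g (σ i) (σ k)
      = (Fintype.card α)! * (∑ j, ∑ l, g j l - ∑ j, g j j) := by
  have hT : ∀ a, ∀ b ∈ univ.erase a,
      ∑ σ : Perm α, g (σ a) (σ b) = ∑ σ : Perm α, g (σ i) (σ k) :=
    fun a b hb => sum_apply_apply_eq_of_ne (ne_of_mem_erase hb).symm hik g
  have hcard : 1 ≤ Fintype.card α := Fintype.card_pos_iff.mpr ⟨i⟩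
  calc (Fintype.card α * (Fintype.card α - 1) : R) * ∑ σ : Perm α, g (σ i) (σ k)
      = ∑ a, ∑ b ∈ univ.erase a, ∑ σ : Perm α, g (σ a) (σ b) := by
        simp [sum_congr rfl (hT _), card_erase_of_mem, mul_assoc, Nat.cast_sub hcard]
    _ = ∑ σ : Perm α, ∑ a, (∑ l, g (σ a) l - g (σ a) (σ a)) := by
        rw [← sum_comm]
        refine (sum_congr rfl fun a _ => sum_comm).trans ?_
        refine sum_congr rfl fun a _ => sum_congr rfl fun σ _ => ?_
        rw [sum_erase_eq_sub (mem_univ a), _root_.Equiv.sum_comp σ (g (σ a))]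
    _ = (Fintype.card α)! * (∑ j, ∑ l, g j l - ∑ j, g j j) := by
        rw [sum_sum_apply (fun j => ∑ l, g j l - g j j), sum_sub_distrib]

end CommRing

section Field

variable {K : Type*} [Field K] [CharZero K]

theorem sum_sum_apply_eq_zero (c : α → α → K) (hrow : ∀ i, ∑ j, c i j = 0) :
    ∑ σ : Perm α, ∑ i, c i (σ i) = 0 := by
  rcases isEmpty_or_nonempty α with hα | hα
  · simp
  have h := card_mul_sum_sum_apply c
  simp only [hrow, sum_const_zero, mul_zero] at h
  exact (mul_eq_zero.mp h).resolve_left (Nat.cast_ne_zero.mpr Fintype.card_ne_zero)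

theorem card_sub_one_mul_sum_sq_sum_apply (c : α → α → K)
    (hrow : ∀ i, ∑ j, c i j = 0) (hcol : ∀ j, ∑ i, c i j = 0) :
    (Fintype.card α - 1) * ∑ σ : Perm α, (∑ i, c i (σ i)) ^ 2
      = (Fintype.card α)! * ∑ i, ∑ j, c i j ^ 2 := by
  rcases isEmpty_or_nonempty α with hα | hα
  · simp
  set n : K := (Fintype.card α : K)
  have hn : n ≠ 0 := Nat.cast_ne_zero.mpr Fintype.card_ne_zero
  have hpair : ∀ i k, n * (n - 1) * ∑ σ : Perm α, c i (σ i) * c k (σ k)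
      = (Fintype.card α)! * (n * (if i = k then ∑ j, c i j ^ 2 else 0) - ∑ j, c i j * c k j) := by
    intro i k
    rcases eq_or_ne i k with rfl | hik
    · have h := card_mul_sum_apply (fun j => c i j * c i j) i
      simp only [if_pos, sq]
      linear_combination (n - 1) * h
    · rw [card_mul_card_sub_one_mul_sum_apply_apply hik (fun j l => c i j * c k l),
        ← sum_mul_sum, hrow, if_neg hik]
      ring
  have hcross : ∑ i, ∑ k, ∑ j, c i j * c k j = 0 :=
    calc ∑ i, ∑ k, ∑ j, c i j * c k j = ∑ i, ∑ j, c i j * ∑ k, c k j :=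
          sum_congr rfl fun i _ => by rw [sum_comm]; simp_rw [mul_sum]
      _ = 0 := by simp [hcol]
  apply mul_left_cancel₀ hn
  calc n * ((n - 1) * ∑ σ : Perm α, (∑ i, c i (σ i)) ^ 2)
      = ∑ i, ∑ k, n * (n - 1) * ∑ σ : Perm α, c i (σ i) * c k (σ k) := by
        simp_rw [sq, sum_mul_sum, mul_sum, mul_assoc]
        exact sum_comm.trans (sum_congr rfl fun i _ => sum_comm)
    _ = n * ((Fintype.card α)! * ∑ i, ∑ j, c i j ^ 2) := by
        simp only [hpair, ← mul_sum, sum_sub_distrib, sum_ite_eq, mem_univ, if_true, hcross]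
        ring

end Field

end Equiv.Perm

section Probability

variable {Ω ι : Type*} [MeasurableSpace Ω] {μ : Measure Ω}

theorem integral_sum_sq_eq_sum_variance_add_sq [IsProbabilityMeasure μ] {s : Finset ι}
    {Z : ι → Ω → ℝ} (hZ : ∀ i ∈ s, MemLp (Z i) 2 μ)
    (hind : Set.Pairwise s fun i j => Z i ⟂ᵢ[μ] Z j) :
    ∫ ω, (∑ i ∈ s, Z i ω) ^ 2 ∂μ = ∑ i ∈ s, Var[Z i; μ] + (∑ i ∈ s, ∫ ω, Z i ω ∂μ) ^ 2 := by
  have h := variance_eq_sub (memLp_finsetSum' s hZ)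
  simp only [Finset.sum_apply, Pi.pow_apply] at h
  rw [IndepFun.variance_sum hZ hind,
    integral_finsetSum s fun i hi => (hZ i hi).integrable one_le_two] at h
  linarith

theorem integral_sum_apply_sq_eq_sum_variance_add_sq [IsProbabilityMeasure μ] {α β : Type*}
    [Fintype α] {X : α → β → Ω → ℝ} (hX : ∀ i j, MemLp (X i j) 2 μ)
    (hind : iIndepFun (fun p : α × β => X p.1 p.2) μ) (f : α → β) :
    ∫ ω, (∑ i, X i (f i) ω) ^ 2 ∂μ
      = ∑ i, Var[X i (f i); μ] + (∑ i, ∫ ω, X i (f i) ω ∂μ) ^ 2 := by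
  refine integral_sum_sq_eq_sum_variance_add_sq (fun i _ => hX i (f i)) fun i _ k _ hik => ?_
  exact hind.indepFun (show ((i, f i) : α × β) ≠ (k, f k) by simp [hik])

variable [Fintype ι] [MeasurableSpace ι] [MeasurableSingletonClass ι]

theorem measurable_comp_of_countable {β : Type*} [MeasurableSpace β] {π : Ω → ι}
    (hπ : Measurable π) {Y : ι → Ω → β} (hY : ∀ σ, Measurable (Y σ)) :
    Measurable fun ω => Y (π ω) ω :=
  (measurable_from_prod_countable_right (f := fun p : ι × Ω => Y p.1 p.2) hY).comp
    (hπ.prodMk measurable_id)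

theorem integral_comp_indepFun_eq_sum {π : Ω → ι} (hπ : Measurable π) {Y : ι → Ω → ℝ}
    (hY : ∀ σ, Integrable (Y σ) μ) (hind : ∀ σ, Y σ ⟂ᵢ[μ] π) :
    ∫ ω, Y (π ω) ω ∂μ = ∑ σ, μ.real (π ⁻¹' {σ}) * ∫ ω, Y σ ω ∂μ := by
  have hfiber : ∀ σ, MeasurableSet (π ⁻¹' {σ}) := fun σ => hπ (measurableSet_singleton σ)
  have hsplit : (fun ω => Y (π ω) ω) = fun ω => ∑ σ, (π ⁻¹' {σ}).indicator (Y σ) ω := by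
    ext ω
    rw [sum_eq_single (π ω)]
    · simp
    · exact fun σ _ hσ => Set.indicator_of_notMem (by simpa using Ne.symm hσ) _
    · simp
  rw [hsplit, integral_finsetSum _ fun σ _ => (hY σ).indicator (hfiber σ)]
  refine sum_congr rfl fun σ _ => ?_
  have hind' : (π ⁻¹' {σ}).indicator 1 ⟂ᵢ[μ] Y σ :=
    ((hind σ).comp measurable_id ((measurable_one (α := ℝ)).indicator
      (measurableSet_singleton σ))).symm
  rw [← integral_indicator_one (hfiber σ), ← hind'.integral_mul_eq_mul_integral
    ((measurable_one.indicator (hfiber σ)).aestronglyMeasurable) (hY σ).1]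
  congr 1
  ext ω
  by_cases hω : ω ∈ π ⁻¹' {σ} <;> simp [hω]

theorem integral_comp_eq_inv_card_mul_sum_of_indepFun {E : Type*} [MeasurableSpace E]
    {π : Ω → ι} (hπ : Measurable π) (hπu : ∀ σ, μ (π ⁻¹' {σ}) = (Fintype.card ι : ℝ≥0∞)⁻¹)
    {Z : Ω → E} (hind : Z ⟂ᵢ[μ] π) {F : ι → E → ℝ} (hF : ∀ σ, Measurable (F σ))
    (hFZ : ∀ σ, Integrable (fun ω => F σ (Z ω)) μ) :
    ∫ ω, F (π ω) (Z ω) ∂μ = (Fintype.card ι : ℝ)⁻¹ * ∑ σ, ∫ ω, F σ (Z ω) ∂μ := by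
  rw [integral_comp_indepFun_eq_sum hπ hFZ fun σ => hind.comp (hF σ) measurable_id, mul_sum]
  simp [measureReal_def, hπu]

end Probability

/-- Variance formula in the combinatorial CLT with a random array:
`Var(Σᵢ X_{i,π(i)}) = (1/n) Σ_{i,j} σ_{ij}² + (1/(n-1)) Σ_{i,j} c_{ij}²`. -/
theorem stmt2 {Ω : Type*} [MeasurableSpace Ω] (μ : Measure Ω) [IsProbabilityMeasure μ]
    (n : ℕ) (hn : 2 ≤ n)
    (X : Fin n → Fin n → Ω → ℝ) (hXm : ∀ i j, Measurable (X i j))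
    (hX2 : ∀ i j, MemLp (X i j) 2 μ)
    (c σsq : Fin n → Fin n → ℝ)
    (hc : ∀ i j, ∫ ω, X i j ω ∂μ = c i j)
    (hσ : ∀ i j, variance (X i j) μ = σsq i j)
    (hrow : ∀ i, ∑ j, c i j = 0) (hcol : ∀ j, ∑ i, c i j = 0)
    (hindep : iIndepFun (fun p : Fin n × Fin n => X p.1 p.2) μ)
    (π : Ω → Equiv.Perm (Fin n)) (hπm : Measurable π)
    (hπu : ∀ σ : Equiv.Perm (Fin n), μ (π ⁻¹' {σ}) = ((Nat.factorial n : ℝ≥0∞))⁻¹)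
    (hπind : IndepFun (fun ω (p : Fin n × Fin n) => X p.1 p.2 ω) π μ) :
    variance (fun ω => ∑ i, X i (π ω i) ω) μ
      = (1 / (n : ℝ)) * ∑ i, ∑ j, σsq i j
        + (1 / ((n : ℝ) - 1)) * ∑ i, ∑ j, (c i j) ^ 2 := by
  let F : Equiv.Perm (Fin n) → (Fin n × Fin n → ℝ) → ℝ := fun σ v => ∑ i, v (i, σ i)
  have hF : ∀ σ, Measurable (F σ) := fun σ => measurable_sum _ fun i _ => measurable_pi_apply _
  have hFX : ∀ σ : Equiv.Perm (Fin n), MemLp (fun ω => ∑ i, X i (σ i) ω) 2 μ :=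
    fun σ => memLp_finsetSum _ fun i _ => hX2 i (σ i)
  have hπu' : ∀ σ, μ (π ⁻¹' {σ}) = (Fintype.card (Equiv.Perm (Fin n)) : ℝ≥0∞)⁻¹ := by
    simpa [Fintype.card_perm] using hπu
  have hmean : ∫ ω, ∑ i, X i (π ω i) ω ∂μ = 0 := by
    rw [integral_comp_eq_inv_card_mul_sum_of_indepFun hπm hπu' hπind hF
      fun σ => (hFX σ).integrable one_le_two]
    simp only [F, integral_finsetSum _ fun i _ => (hX2 _ _).integrable one_le_two, hc,
      Equiv.Perm.sum_sum_apply_eq_zero c hrow, mul_zero]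
  have hsecond : ∫ ω, (∑ i, X i (π ω i) ω) ^ 2 ∂μ
      = ((n ! : ℕ) : ℝ)⁻¹ * (∑ σ : Equiv.Perm (Fin n), ∑ i, σsq i (σ i)
          + ∑ σ : Equiv.Perm (Fin n), (∑ i, c i (σ i)) ^ 2) := by
    rw [integral_comp_eq_inv_card_mul_sum_of_indepFun (F := fun σ v => F σ v ^ 2) hπm hπu'
      hπind (fun σ => (hF σ).pow_const 2) fun σ => (hFX σ).integrable_sq]
    simp only [F, integral_sum_apply_sq_eq_sum_variance_add_sq hX2 hindep, hσ, hc,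
      sum_add_distrib, Fintype.card_perm, Fintype.card_fin]
  have hS : Measurable fun ω => ∑ i, X i (π ω i) ω :=
    measurable_comp_of_countable hπm fun σ => measurable_sum _ fun i _ => hXm i (σ i)
  rw [variance_of_integral_eq_zero hS.aemeasurable hmean, hsecond]
  have hσsq := Equiv.Perm.card_mul_sum_sum_apply σsq
  have hc2 := Equiv.Perm.card_sub_one_mul_sum_sq_sum_apply c hrow hcol
  simp only [Fintype.card_fin] at hσsq hc2
  have hn0 : (n : ℝ) ≠ 0 := by norm_cast; omega
  have hn1 : (n : ℝ) - 1 ≠ 0 := sub_ne_zero.mpr (by norm_cast; omega)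
  rw [eq_div_of_mul_eq hn0 ((mul_comm _ _).trans hσsq),
    eq_div_of_mul_eq hn1 ((mul_comm _ _).trans hc2)]
  field_simp
end

section
/- Let n ≥ 2, p ∈ (0,1), and {I_{i,j} : 1 ≤ i < j ≤ n} i.i.d. Bernoulli(p) (with I_{j,i} = I_{i,j}). For t ∈ [0,1] let T_n(t) = ((⌊nt⌋-2)/n^2) Σ_{1≤i<j≤⌊nt⌋} I_{i,j}. Let (I,J) be uniform over pairs 1 ≤ I < J ≤ n, independent of everything, and I'_{I,J} an independent Bernoulli(p). Define T'_n(t) = T_n(t) - ((⌊nt⌋-2)/n^2)(I_{I,J} - I'_{I,J}) 1_{[I/n,1]∩[J/n,1]}(t). Then for every t ∈ [0,1], E[T_n(t) - T'_n(t) | G] = (1/C(n,2)) (T_n(t) - E[T_n(t)]), where G is the σ-algebra generated by {I_{i,j}} and C(n,2) = n(n-1)/2. -/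
open MeasureTheory ProbabilityTheory
open scoped ENNReal NNReal

/-- The rescaled edge-count process
`T_n(t) = ((⌊nt⌋-2)/n²) Σ_{1≤i<j≤⌊nt⌋} I_{i,j}`. -/
noncomputable def Tproc {Ω : Type*} (n : ℕ) (E : Fin n → Fin n → Ω → ℝ)
    (ω : Ω) (t : ℝ) : ℝ :=
  (((⌊(n : ℝ) * t⌋ : ℝ) - 2) / (n : ℝ) ^ 2) *
    ∑ i : Fin n, ∑ j : Fin n,
      if (i : ℕ) < (j : ℕ) ∧ ((j : ℕ) + 1 : ℤ) ≤ ⌊(n : ℝ) * t⌋ then E i j ω else 0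

/-- The resampled version `T'_n` of `T_n`, where the edge at the random pair
`(I,J) = pr ω` is replaced by the independent Bernoulli variable `E' ω`. -/
noncomputable def Tproc' {Ω : Type*} (n : ℕ) (E : Fin n → Fin n → Ω → ℝ)
    (pr : Ω → {q : Fin n × Fin n // q.1 < q.2}) (E' : Ω → ℝ) (ω : Ω) (t : ℝ) : ℝ :=
  Tproc n E ω t
    - (((⌊(n : ℝ) * t⌋ : ℝ) - 2) / (n : ℝ) ^ 2) *
        (E (pr ω).1.1 (pr ω).1.2 ω - E' ω) *
        (if max ((((pr ω).1.1 : ℕ) + 1 : ℝ) / (n : ℝ))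
              ((((pr ω).1.2 : ℕ) + 1 : ℝ) / (n : ℝ)) ≤ t then 1 else 0)

/-!
Write `T_n(t) - T'_n(t) = Σ_q w_q 1{(I,J) = q} (I_q - I')`, where `w_q` is the weight of the edge
`q` in `T_n(t)`. The triple `((I,J), I')` is independent of `G` while every `I_q` is
`G`-measurable, so conditioning on `G` replaces `1{(I,J) = q}` by its mean `1/C(n,2)` and
`1{(I,J) = q} I'` by its mean `p/C(n,2)`. Hence
`E[T_n - T'_n | G] = (1/C(n,2)) Σ_q w_q (I_q - p) = (1/C(n,2)) (T_n - E T_n)`.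
-/

section Independence

variable {Ω : Type*} {mΩ : MeasurableSpace Ω} {μ : Measure Ω}

lemma integrable_of_forall_eq_zero_or_one [IsFiniteMeasure μ] {f : Ω → ℝ} (hf : Measurable f)
    (h01 : ∀ ω, f ω = 0 ∨ f ω = 1) : Integrable f μ :=
  .of_bound hf.aestronglyMeasurable 1 <| .of_forall fun ω => by rcases h01 ω with h | h <;> simp [h]

lemma integral_eq_measureReal_of_forall_eq_zero_or_one {f : Ω → ℝ} (hf : Measurable f)
    (h01 : ∀ ω, f ω = 0 ∨ f ω = 1) : ∫ ω, f ω ∂μ = μ.real {ω | f ω = 1} := by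
  have hf_eq : f = {ω | f ω = 1}.indicator 1 := by
    funext ω
    rcases h01 ω with h | h <;> simp [h]
  conv_lhs => rw [hf_eq]
  exact integral_indicator_one (hf (measurableSet_singleton 1))

lemma ProbabilityTheory.IndepFun.integral_indicator_preimage {β : Type*} [MeasurableSpace β]
    {Z : Ω → β} {Y : Ω → ℝ} (hZY : IndepFun Z Y μ) (hZ : Measurable Z)
    (hY : AEStronglyMeasurable Y μ) {s : Set β} (hs : MeasurableSet s) :
    ∫ ω, (Z ⁻¹' s).indicator Y ω ∂μ = μ.real (Z ⁻¹' s) * ∫ ω, Y ω ∂μ := by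
  have hs_ind : Measurable (s.indicator (1 : β → ℝ)) := measurable_one.indicator hs
  have hpre : (Z ⁻¹' s).indicator Y = (s.indicator 1 ∘ Z) * (id ∘ Y) := by
    funext ω
    by_cases h : Z ω ∈ s <;> simp [h]
  rw [hpre, (hZY.comp hs_ind measurable_id).integral_mul_eq_mul_integral
    (hs_ind.comp hZ).aestronglyMeasurable hY, ← integral_indicator_one (hZ hs)]
  rfl

lemma condExp_indicator_sub_of_indep [IsFiniteMeasure μ] {m m' : MeasurableSpace Ω}
    (hm : m ≤ mΩ) (hm' : m' ≤ mΩ) (hindep : Indep m' m μ) {A : Set Ω} (hA : MeasurableSet[m'] A)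
    {X Y : Ω → ℝ} (hX : StronglyMeasurable[m] X) (hXi : Integrable X μ)
    (hY : StronglyMeasurable[m'] Y) (hYi : Integrable Y μ) :
    μ[A.indicator (X - Y) | m] =ᵐ[μ] fun ω => μ.real A * X ω - ∫ ω, A.indicator Y ω ∂μ := by
  have hA₀ : MeasurableSet[mΩ] A := hm' _ hA
  have hXA_eq : X * A.indicator 1 = A.indicator X := by
    funext ω
    by_cases h : ω ∈ A <;> simp [h]
  have hXA_int : Integrable (X * A.indicator 1) μ := hXA_eq ▸ hXi.indicator hA₀
  have hXA : μ[X * A.indicator 1 | m] =ᵐ[μ] X * μ[A.indicator 1 | m] :=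
    condExp_mul_of_stronglyMeasurable_left hX hXA_int ((integrable_const 1).indicator hA₀)
  have hA_const : μ[A.indicator (1 : Ω → ℝ) | m] =ᵐ[μ] fun _ => μ.real A := by
    have h1 : StronglyMeasurable[m'] (1 : Ω → ℝ) := stronglyMeasurable_one
    have h := condExp_indep_eq hm' hm (h1.indicator hA) hindep
    rwa [integral_indicator_one hA₀] at h
  have hY_const := condExp_indep_eq hm' hm (hY.indicator hA) hindep
  have hsplit : A.indicator (X - Y) = X * A.indicator 1 - A.indicator Y := by
    rw [hXA_eq, Set.indicator_sub']
  rw [hsplit]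
  filter_upwards [condExp_sub hXA_int (hYi.indicator hA₀) m, hXA, hA_const, hY_const]
    with ω h₁ h₂ h₃ h₄
  rw [h₁, Pi.sub_apply, h₂, Pi.mul_apply, h₃, h₄, mul_comm]

end Independence

abbrev Edge (n : ℕ) := {q : Fin n × Fin n // q.1 < q.2}

/-- Vertices are 0-indexed, so the edge `(i, j)`, `i < j`, lies among the first `⌊nt⌋` vertices
iff `j + 1 ≤ ⌊nt⌋`. -/
noncomputable def Tcoeff (n : ℕ) (t : ℝ) (j : Fin n) : ℝ :=
  if ((j : ℕ) + 1 : ℤ) ≤ ⌊(n : ℝ) * t⌋ then ((⌊(n : ℝ) * t⌋ : ℝ) - 2) / (n : ℝ) ^ 2 else 0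

lemma max_add_one_div_le_iff_le_floor {n i j : ℕ} (hn : 0 < n) (hij : i < j) (t : ℝ) :
    max (((i : ℝ) + 1) / n) (((j : ℝ) + 1) / n) ≤ t ↔ ((j : ℤ) + 1) ≤ ⌊(n : ℝ) * t⌋ := by
  have hn' : (0 : ℝ) < n := by exact_mod_cast hn
  have hij' : (i : ℝ) ≤ j := by exact_mod_cast hij.le
  rw [max_eq_right (by gcongr), div_le_iff₀ hn', Int.le_floor, mul_comm]
  push_cast
  rfl

lemma Tproc_eq_sum_Tcoeff {Ω : Type*} (n : ℕ) (E : Fin n → Fin n → Ω → ℝ) (ω : Ω) (t : ℝ) :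
    Tproc n E ω t = ∑ q : Edge n, Tcoeff n t q.1.2 * E q.1.1 q.1.2 ω := by
  classical
  rw [← Finset.sum_subtype (Finset.univ.filter fun q : Fin n × Fin n => q.1 < q.2) (by simp)
      (fun q => Tcoeff n t q.2 * E q.1 q.2 ω), Finset.sum_filter, Fintype.sum_prod_type, Tproc,
    Finset.mul_sum]
  refine Finset.sum_congr rfl fun i _ => ?_
  rw [Finset.mul_sum]
  refine Finset.sum_congr rfl fun j _ => ?_
  simp only [Tcoeff, Fin.lt_def]
  split_ifs <;> simp_all

lemma Tproc_sub_Tproc' {Ω : Type*} (n : ℕ) (E : Fin n → Fin n → Ω → ℝ) (pr : Ω → Edge n)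
    (E' : Ω → ℝ) (ω : Ω) (t : ℝ) :
    Tproc n E ω t - Tproc' n E pr E' ω t
      = ∑ q : Edge n, Tcoeff n t q.1.2 * (pr ⁻¹' {q}).indicator (E q.1.1 q.1.2 - E') ω := by
  rw [Tproc', sub_sub_cancel, Finset.sum_eq_single (pr ω) (fun q _ hq => by simp [Ne.symm hq])
    (by simp)]
  have hiff := max_add_one_div_le_iff_le_floor (Fin.pos (pr ω).1.1) (pr ω).2 t
  simp only [Tcoeff]
  split_ifs <;> simp_all

lemma integral_Tproc {Ω : Type*} [MeasurableSpace Ω] {μ : Measure Ω} (n : ℕ)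
    {E : Fin n → Fin n → Ω → ℝ} (hE : ∀ q : Edge n, Integrable (E q.1.1 q.1.2) μ) (t : ℝ) :
    ∫ ω, Tproc n E ω t ∂μ = ∑ q : Edge n, Tcoeff n t q.1.2 * ∫ ω, E q.1.1 q.1.2 ω ∂μ := by
  simp_rw [Tproc_eq_sum_Tcoeff]
  rw [integral_finsetSum _ fun q _ => (hE q).const_mul _]
  simp_rw [integral_const_mul]

lemma condExp_sum_mul_of_ae_eq {Ω ι : Type*} [Fintype ι] {m mΩ : MeasurableSpace Ω}
    {μ : Measure Ω} (c : ι → ℝ) {f g : ι → Ω → ℝ} (hf : ∀ i, Integrable (f i) μ)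
    (hfg : ∀ i, μ[f i | m] =ᵐ[μ] g i) :
    μ[fun ω => ∑ i, c i * f i ω | m] =ᵐ[μ] fun ω => ∑ i, c i * g i ω := by
  have hsum : (fun ω => ∑ i, c i * f i ω) = ∑ i, c i • f i := by
    funext ω
    simp only [Finset.sum_apply, Pi.smul_apply, smul_eq_mul]
  rw [hsum]
  filter_upwards [condExp_finsetSum (fun i _ => (hf i).smul (c i)) m,
    ae_all_iff.2 fun i => condExp_smul (c i) (f i) m, ae_all_iff.2 hfg] with ω h₁ h₂ h₃
  rw [h₁]
  simp only [Finset.sum_apply, h₂, Pi.smul_apply, smul_eq_mul, h₃]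

section Resampling

variable {Ω : Type*} [MeasurableSpace Ω] {μ : Measure Ω} [IsFiniteMeasure μ] {n : ℕ}
  {E : Fin n → Fin n → Ω → ℝ} {pr : Ω → Edge n} {E' : Ω → ℝ}

lemma condExp_indicator_resample (hEm : ∀ i j, Measurable (E i j))
    (hEi : ∀ i j, Integrable (E i j) μ) (hprm : Measurable pr) (hE'm : Measurable E')
    (hE'i : Integrable E' μ)
    (hindPair : IndepFun (fun ω => (pr ω, E' ω)) (fun ω (x : Fin n × Fin n) => E x.1 x.2 ω) μ)
    (hindPrE' : IndepFun pr E' μ) (q : Edge n) :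
    μ[(pr ⁻¹' {q}).indicator (E q.1.1 q.1.2 - E')
        | MeasurableSpace.comap (fun ω (x : Fin n × Fin n) => E x.1 x.2 ω) inferInstance]
      =ᵐ[μ] fun ω => μ.real (pr ⁻¹' {q}) * (E q.1.1 q.1.2 ω - ∫ ω, E' ω ∂μ) := by
  set F : Ω → Fin n × Fin n → ℝ := fun ω q => E q.1 q.2 ω
  have hF : Measurable F := measurable_pi_lambda _ fun q => hEm q.1 q.2
  have hEF : StronglyMeasurable[MeasurableSpace.comap F inferInstance] (E q.1.1 q.1.2) :=
    Measurable.stronglyMeasurable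
      (by exact (measurable_pi_apply (q.1.1, q.1.2)).comp (comap_measurable F))
  have hZ : Measurable[MeasurableSpace.comap (fun ω => (pr ω, E' ω)) inferInstance]
      (fun ω => (pr ω, E' ω)) := comap_measurable _
  filter_upwards [condExp_indicator_sub_of_indep hF.comap_le (hprm.prodMk hE'm).comap_le
    hindPair (hZ.fst (measurableSet_singleton q)) hEF (hEi _ _) hZ.snd.stronglyMeasurable hE'i]
    with ω hω
  rw [hω, hindPrE'.integral_indicator_preimage hprm hE'i.1 (measurableSet_singleton q), mul_sub]

lemma condExp_Tproc_sub_Tproc' (hEm : ∀ i j, Measurable (E i j))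
    (hEi : ∀ i j, Integrable (E i j) μ) (hprm : Measurable pr) (hE'm : Measurable E')
    (hE'i : Integrable E' μ)
    (hindPair : IndepFun (fun ω => (pr ω, E' ω)) (fun ω (x : Fin n × Fin n) => E x.1 x.2 ω) μ)
    (hindPrE' : IndepFun pr E' μ) (t : ℝ) :
    μ[fun ω => Tproc n E ω t - Tproc' n E pr E' ω t
        | MeasurableSpace.comap (fun ω (x : Fin n × Fin n) => E x.1 x.2 ω) inferInstance]
      =ᵐ[μ] fun ω => ∑ q : Edge n,
        Tcoeff n t q.1.2 * (μ.real (pr ⁻¹' {q}) * (E q.1.1 q.1.2 ω - ∫ ω, E' ω ∂μ)) := by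
  simp_rw [Tproc_sub_Tproc']
  exact condExp_sum_mul_of_ae_eq _
    (fun q => ((hEi _ _).sub hE'i).indicator (hprm (measurableSet_singleton q)))
    (condExp_indicator_resample hEm hEi hprm hE'm hE'i hindPair hindPrE')

end Resampling

theorem stmt9_general {Ω : Type*} [MeasurableSpace Ω] (μ : Measure Ω) [IsProbabilityMeasure μ]
    (n : ℕ) (p : ℝ)
    (E : Fin n → Fin n → Ω → ℝ) (hEm : ∀ i j, Measurable (E i j))
    (h01 : ∀ i j ω, E i j ω = 0 ∨ E i j ω = 1)
    (hber : ∀ i j : Fin n, i < j → μ {ω | E i j ω = 1} = ENNReal.ofReal p)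
    (pr : Ω → {q : Fin n × Fin n // q.1 < q.2}) (hprm : Measurable pr)
    (hpru : ∀ q, μ (pr ⁻¹' {q}) = (((n * (n - 1) / 2 : ℕ)) : ℝ≥0∞)⁻¹)
    (E' : Ω → ℝ) (hE'm : Measurable E')
    (hE'01 : ∀ ω, E' ω = 0 ∨ E' ω = 1) (hE'p : μ {ω | E' ω = 1} = ENNReal.ofReal p)
    (hindPair : IndepFun (fun ω => (pr ω, E' ω))
      (fun ω (q : Fin n × Fin n) => E q.1 q.2 ω) μ)
    (hindPrE' : IndepFun pr E' μ)
    (t : ℝ) :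
    μ[fun ω => Tproc n E ω t - Tproc' n E pr E' ω t
        | MeasurableSpace.comap (fun ω (q : Fin n × Fin n) => E q.1 q.2 ω) inferInstance]
      =ᵐ[μ] fun ω =>
        (1 / ((n : ℝ) * ((n : ℝ) - 1) / 2)) *
          (Tproc n E ω t - ∫ ω', Tproc n E ω' t ∂μ) := by
  have hEi : ∀ i j, Integrable (E i j) μ := fun i j =>
    integrable_of_forall_eq_zero_or_one (hEm i j) (h01 i j)
  have hE'i : Integrable E' μ := integrable_of_forall_eq_zero_or_one hE'm hE'01
  have hE_mean : ∀ q : Edge n, ∫ ω, E q.1.1 q.1.2 ω ∂μ = ∫ ω, E' ω ∂μ := fun q => by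
    rw [integral_eq_measureReal_of_forall_eq_zero_or_one (hEm _ _) (h01 _ _),
      integral_eq_measureReal_of_forall_eq_zero_or_one hE'm hE'01, measureReal_def,
      measureReal_def, hber _ _ q.2, hE'p]
  have hpr_real : ∀ q, μ.real (pr ⁻¹' {q}) = 1 / ((n : ℝ) * ((n : ℝ) - 1) / 2) := fun q => by
    rw [measureReal_def, hpru, ENNReal.toReal_inv, ENNReal.toReal_natCast,
      ← Nat.choose_two_right, Nat.cast_choose_two, one_div]
  filter_upwards [condExp_Tproc_sub_Tproc' hEm hEi hprm hE'm hE'i hindPair hindPrE' t] with ω hω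
  rw [hω, integral_Tproc n (fun q => hEi _ _), Tproc_eq_sum_Tcoeff, ← Finset.sum_sub_distrib,
    Finset.mul_sum]
  refine Finset.sum_congr rfl fun q _ => ?_
  rw [hpr_real, hE_mean]
  ring

/-- Conditional linearity for the edge-count exchangeable pair:
`E[T_n(t) - T'_n(t) | G] = (1/C(n,2)) (T_n(t) - E T_n(t))`, `G = σ({I_{i,j}})`. -/
theorem stmt9 {Ω : Type*} [MeasurableSpace Ω] (μ : Measure Ω) [IsProbabilityMeasure μ]
    (n : ℕ) (hn : 2 ≤ n) (p : ℝ) (hp : p ∈ Set.Ioo (0 : ℝ) 1)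
    (E : Fin n → Fin n → Ω → ℝ) (hEm : ∀ i j, Measurable (E i j))
    (hsym : ∀ i j, E j i = E i j) (hdiag : ∀ i ω, E i i ω = 0)
    (h01 : ∀ i j ω, E i j ω = 0 ∨ E i j ω = 1)
    (hber : ∀ i j : Fin n, i < j → μ {ω | E i j ω = 1} = ENNReal.ofReal p)
    (hind : iIndepFun
      (fun q : {q : Fin n × Fin n // q.1 < q.2} => E q.1.1 q.1.2) μ)
    (pr : Ω → {q : Fin n × Fin n // q.1 < q.2}) (hprm : Measurable pr)
    (hpru : ∀ q, μ (pr ⁻¹' {q}) = (((n * (n - 1) / 2 : ℕ)) : ℝ≥0∞)⁻¹)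
    (E' : Ω → ℝ) (hE'm : Measurable E')
    (hE'01 : ∀ ω, E' ω = 0 ∨ E' ω = 1) (hE'p : μ {ω | E' ω = 1} = ENNReal.ofReal p)
    (hindPair : IndepFun (fun ω => (pr ω, E' ω))
      (fun ω (q : Fin n × Fin n) => E q.1 q.2 ω) μ)
    (hindPrE' : IndepFun pr E' μ)
    (t : ℝ) (ht : t ∈ Set.Icc (0 : ℝ) 1) :
    μ[fun ω => Tproc n E ω t - Tproc' n E pr E' ω t
        | MeasurableSpace.comap (fun ω (q : Fin n × Fin n) => E q.1 q.2 ω) inferInstance]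
      =ᵐ[μ] fun ω =>
        (1 / ((n : ℝ) * ((n : ℝ) - 1) / 2)) *
          (Tproc n E ω t - ∫ ω', Tproc n E ω' t ∂μ) :=
  stmt9_general μ n p E hEm h01 hber pr hprm hpru E' hE'm hE'01 hE'p hindPair hindPrE' t
end
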